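/- Let (X,‖·‖) be a normed vector space with modulus of convexity δ and characteristic of convexity ε₀ < 2. Then for all ε∈(ε₀,2], δ(2(1−δ(ε))) ≤ 1 − ε/2. -/

import Mathlib

open Metric Set

/-- The modulus of convexity of a normed space. -/
noncomputable def modConv (X : Type*) [NormedAddCommGroup X] (ε : ℝ) : ℝ :=
  sInf {t : ℝ | ∃ x y : X, ‖x‖ ≤ 1 ∧ ‖y‖ ≤ 1 ∧ ε ≤ ‖x - y‖ ∧ t = 1 - ‖x + y‖ / 2}

/-- The characteristic of convexity of a normed space. -/
noncomputable def charConv (X : Type*) [NormedAddCommGroup X] : ℝ :=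
  sSup {ε : ℝ | ε ∈ Set.Icc 0 2 ∧ modConv X ε = 0}

/-!
Pick `u, v` in the unit ball with `‖u - v‖ ≥ ε` and `‖u + v‖ > 2 - 2(1 + μ)δ(ε)`; such a pair
exists since `δ(ε) > 0` for `ε > ε₀`. The pair `u, -v` has midpoint of norm at least `ε/2` and
distance almost `2(1 - δ(ε))`. Replacing it by `(1 - μ)u + μe, -(1 - μ)v - μe`,
with `e` the unit vector along `u + v`, raises the distance to `(1 - μ)‖u + v‖ + 2μ`, which is
at least `2(1 - δ(ε))`, and shrinks the midpoint only by the factor `1 - μ`. Let `μ → 0`.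
-/

section NormedAddCommGroup

variable {X : Type*} [NormedAddCommGroup X]

lemma one_sub_norm_add_div_two_nonneg {x y : X} (hx : ‖x‖ ≤ 1) (hy : ‖y‖ ≤ 1) :
    0 ≤ 1 - ‖x + y‖ / 2 := by
  linarith [norm_add_le x y]

lemma modConv_le {ε : ℝ} {x y : X} (hx : ‖x‖ ≤ 1) (hy : ‖y‖ ≤ 1) (hxy : ε ≤ ‖x - y‖) :
    modConv X ε ≤ 1 - ‖x + y‖ / 2 := by
  refine csInf_le ⟨0, ?_⟩ ⟨x, y, hx, hy, hxy, rfl⟩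
  rintro t ⟨x, y, hx, hy, -, rfl⟩
  exact one_sub_norm_add_div_two_nonneg hx hy

lemma modConv_nonneg (ε : ℝ) : 0 ≤ modConv X ε := by
  apply Real.sInf_nonneg
  rintro t ⟨x, y, hx, hy, -, rfl⟩
  exact one_sub_norm_add_div_two_nonneg hx hy

lemma charConv_nonneg : 0 ≤ charConv X :=
  Real.sSup_nonneg fun _ hε ↦ hε.1.1

lemma modConv_pos {ε : ℝ} (hε₀ : charConv X < ε) (hε : ε ≤ 2) : 0 < modConv X ε := by
  refine (modConv_nonneg ε).lt_of_ne fun hδ ↦ hε₀.not_ge ?_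
  exact le_csSup ⟨2, fun _ h ↦ h.1.2⟩ ⟨⟨charConv_nonneg.trans hε₀.le, hε⟩, hδ.symm⟩

end NormedAddCommGroup

section NormedSpace

variable {X : Type*} [NormedAddCommGroup X] [NormedSpace ℝ X] [Nontrivial X]

lemma exists_norm_eq_one_and_eq_norm_smul (z : X) : ∃ e : X, ‖e‖ = 1 ∧ z = ‖z‖ • e := by
  rcases eq_or_ne z 0 with rfl | hz
  · obtain ⟨e, he⟩ := exists_norm_eq X zero_le_one
    exact ⟨e, he, by simp⟩
  · refine ⟨‖z‖⁻¹ • z, norm_smul_inv_norm hz, ?_⟩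
    rw [smul_smul, mul_inv_cancel₀ (norm_ne_zero_iff.mpr hz), one_smul]

lemma exists_lt_of_modConv_lt {ε t : ℝ} (hε : ε ≤ 2) (ht : modConv X ε < t) :
    ∃ x y : X, ‖x‖ ≤ 1 ∧ ‖y‖ ≤ 1 ∧ ε ≤ ‖x - y‖ ∧ 1 - ‖x + y‖ / 2 < t := by
  obtain ⟨e, he⟩ := exists_norm_eq X zero_le_one
  have hne : {t : ℝ | ∃ x y : X, ‖x‖ ≤ 1 ∧ ‖y‖ ≤ 1 ∧ ε ≤ ‖x - y‖ ∧
      t = 1 - ‖x + y‖ / 2}.Nonempty := by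
    refine ⟨_, e, -e, he.le, by rw [norm_neg, he], ?_, rfl⟩
    rw [sub_neg_eq_add, ← two_smul ℝ e, norm_smul, he]
    norm_num [hε]
  obtain ⟨_, ⟨x, y, hx, hy, hxy, rfl⟩, hlt⟩ := exists_lt_of_csInf_lt hne ht
  exact ⟨x, y, hx, hy, hxy, hlt⟩

lemma modConv_le_of_le_stretch {s μ : ℝ} {x y : X} (hx : ‖x‖ ≤ 1) (hy : ‖y‖ ≤ 1)
    (hμ₀ : 0 ≤ μ) (hμ₁ : μ ≤ 1) (hs : s ≤ (1 - μ) * ‖x - y‖ + 2 * μ) :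
    modConv X s ≤ 1 - (1 - μ) * ‖x + y‖ / 2 := by
  obtain ⟨e, he, hxy⟩ := exists_norm_eq_one_and_eq_norm_smul (x - y)
  have hball : Convex ℝ (closedBall (0 : X) 1) := convex_closedBall 0 1
  simp only [Convex, StarConvex, mem_closedBall_zero_iff] at hball
  have ha : ‖(1 - μ) • x + μ • e‖ ≤ 1 := hball hx he.le (by linarith) hμ₀ (by ring)
  have hb : ‖(1 - μ) • y + μ • -e‖ ≤ 1 :=
    hball hy (by rw [norm_neg, he]) (by linarith) hμ₀ (by ring)
  have hsub : (1 - μ) • x + μ • e - ((1 - μ) • y + μ • -e)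
      = ((1 - μ) * ‖x - y‖ + 2 * μ) • e := by
    rw [add_smul, mul_smul, ← hxy]
    module
  have hadd : (1 - μ) • x + μ • e + ((1 - μ) • y + μ • -e) = (1 - μ) • (x + y) := by
    module
  have key := modConv_le (ε := s) ha hb <| by
    rw [hsub, norm_smul, he, mul_one, Real.norm_of_nonneg (by nlinarith [norm_nonneg (x - y)])]
    exact hs
  rwa [hadd, norm_smul_of_nonneg (by linarith)] at key

end NormedSpace

theorem modConv_self_estimate_general {X : Type*} [NormedAddCommGroup X] [NormedSpace ℝ X]
    [Nontrivial X] :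
    ∀ ε ∈ Set.Ioc (charConv X) 2,
      modConv X (2 * (1 - modConv X ε)) ≤ 1 - ε / 2 := by
  rintro ε ⟨hε₀, hε⟩
  set δ := modConv X ε
  have hδ : 0 < δ := modConv_pos hε₀ hε
  have hbound : ∀ μ, 0 < μ → μ ≤ 1 → modConv X (2 * (1 - δ)) ≤ 1 - (1 - μ) * ε / 2 := by
    intro μ hμ₀ hμ₁
    obtain ⟨u, v, hu, hv, huv, hnear⟩ :=
      exists_lt_of_modConv_lt hε (lt_add_of_pos_right δ (mul_pos hμ₀ hδ))
    have hv' : ‖-v‖ ≤ 1 := by rwa [norm_neg]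
    have hstretch := modConv_le_of_le_stretch hu hv' hμ₀.le hμ₁ (s := 2 * (1 - δ)) <| by
      have hfar : (1 - μ) * (2 - 2 * δ - 2 * μ * δ) ≤ (1 - μ) * ‖u + v‖ :=
        mul_le_mul_of_nonneg_left (by linarith) (by linarith)
      rw [sub_neg_eq_add]
      nlinarith [mul_pos hμ₀ (mul_pos hμ₀ hδ)]
    rw [← sub_eq_add_neg] at hstretch
    nlinarith
  refine le_of_forall_pos_le_add fun θ hθ ↦ ?_
  have hε0 : 0 ≤ ε := charConv_nonneg.trans hε₀.le
  have hθ' := hbound (min θ 1) (lt_min hθ one_pos) (min_le_right θ 1)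
  nlinarith [min_le_left θ 1]

/-- Goebel–Kirk: if the characteristic of convexity `ε₀` of a normed space is `< 2`, then
`δ(2(1-δ(ε))) ≤ 1 - ε/2` for all `ε ∈ (ε₀, 2]`. -/
theorem modConv_self_estimate {X : Type*} [NormedAddCommGroup X] [NormedSpace ℝ X]
    [Nontrivial X] (h : charConv X < 2) :
    ∀ ε ∈ Set.Ioc (charConv X) 2,
      modConv X (2 * (1 - modConv X ε)) ≤ 1 - ε / 2 :=
  modConv_self_estimate_general
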